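/- For every ε > 0 there exists a constant C > 0 such that for every prime p and all integers M, N with 1 ≤ M, N < p, one has ∑ 1/‖x‖_p ≤ C (1/N + M/p) p^ε, where the sum is over all integers x with 1 ≤ x ≤ p-1, ‖x‖_p > p/M and ‖x̄‖_p ≤ p/N. -/

import Mathlib

/-- the multiplicative inverse of `x` modulo `p`, as a natural number -/
def pinv (p x : ℕ) : ℕ := ((x : ZMod p)⁻¹).val

/-- `‖u‖_p`: the distance from `u` to the nearest multiple of `p` -/
def dp (p : ℕ) (u : ℤ) : ℕ := min (u % p).toNat (p - (u % p).toNat)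

/-!
Write `u = ‖x‖_p` and `v = ‖x̄‖_p`, so that `uv ≡ ±1 (mod p)`. With `j = ⌊uv/p⌋` this gives
`uv ∈ {pj + 1, pj + p - 1}` and `p (j + 1) ≤ 2uv`, hence `1/u ≤ 2/(N (j + 1))` because `Nv ≤ p`.
For fixed `j < p`, `u` divides one of two numbers below `p²` and determines `x` up to sign, so by
the divisor bound `d(n) ≪_δ n^δ` at most `O(p^{2δ})` values of `x` share this `j`. Summing
`2/(N (j + 1))` over `j < p` costs a harmonic sum `≤ (1 + 1/δ) p^δ`; take `δ = ε/3`.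
-/

open Finset Real

lemma sum_le_mul_sum_of_card_fiber_le {α β R : Type*} [DecidableEq β]
    [CommSemiring R] [PartialOrder R] [IsOrderedRing R]
    {s : Finset α} {t : Finset β} {f : α → β} {g : α → R} {h : β → R} {K : R}
    (hf : ∀ a ∈ s, f a ∈ t) (hg : ∀ a ∈ s, g a ≤ h (f a)) (hh : ∀ b ∈ t, 0 ≤ h b)
    (hK : ∀ b ∈ t, (#{a ∈ s | f a = b} : R) ≤ K) :
    ∑ a ∈ s, g a ≤ K * ∑ b ∈ t, h b :=
  calc ∑ a ∈ s, g a ≤ ∑ a ∈ s, h (f a) := sum_le_sum hg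
    _ = ∑ b ∈ t, (#{a ∈ s | f a = b} : R) * h b := by
        rw [← sum_fiberwise_of_maps_to hf]
        refine sum_congr rfl fun b _ => ?_
        rw [sum_congr rfl fun a ha => congrArg h (mem_filter.mp ha).2, sum_const, nsmul_eq_mul]
    _ ≤ ∑ b ∈ t, K * h b :=
        sum_le_sum fun b hb => mul_le_mul_of_nonneg_right (hK b hb) (hh b hb)
    _ = K * ∑ b ∈ t, h b := (mul_sum ..).symm

lemma add_one_le_mul_two_rpow {δ : ℝ} (hδ : 0 < δ) (a : ℕ) :
    (a + 1 : ℝ) ≤ (1 + 1 / (δ * log 2)) * 2 ^ (a * δ) := by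
  have hlog : 0 < δ * log 2 := mul_pos hδ (log_pos one_lt_two)
  have hexp : a * δ * log 2 + 1 ≤ (2 : ℝ) ^ (a * δ) := by
    rw [rpow_def_of_pos two_pos, mul_comm (log 2)]
    exact add_one_le_exp _
  have hone : (1 : ℝ) ≤ 2 ^ (a * δ) := one_le_rpow one_le_two (by positivity)
  have ha : (a : ℝ) ≤ 2 ^ (a * δ) / (δ * log 2) := by
    rw [le_div_iff₀ hlog]; linarith
  calc (a + 1 : ℝ) ≤ 2 ^ (a * δ) / (δ * log 2) + 2 ^ (a * δ) := add_le_add ha hone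
    _ = _ := by ring

lemma add_one_le_rpow_of_two_le_rpow {q δ : ℝ} (hq : 0 ≤ q) (h : 2 ≤ q ^ δ) (a : ℕ) :
    (a + 1 : ℝ) ≤ q ^ (a * δ) := by
  calc (a + 1 : ℝ) ≤ 2 ^ a := by exact_mod_cast Nat.lt_two_pow_self
    _ ≤ (q ^ δ) ^ a := pow_le_pow_left₀ zero_le_two h a
    _ = q ^ (a * δ) := by rw [← rpow_natCast, ← rpow_mul hq, mul_comm]

lemma exists_card_divisors_le_mul_rpow {δ : ℝ} (hδ : 0 < δ) :
    ∃ C : ℝ, 0 < C ∧ ∀ n : ℕ, (#n.divisors : ℝ) ≤ C * n ^ δ := by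
  set K : ℝ := 1 + 1 / (δ * log 2)
  have hK : 1 ≤ K := le_add_of_nonneg_right (by have := log_pos one_lt_two; positivity)
  set Q : ℕ := ⌈(2 : ℝ) ^ δ⁻¹⌉₊
  -- small primes contribute a bounded factor, large primes `q` (with `q ^ δ ≥ 2`) none
  have hprime : ∀ q : ℕ, 2 ≤ q → ∀ a : ℕ,
      (a + 1 : ℝ) ≤ (if q < Q then K else 1) * (q : ℝ) ^ (a * δ) := by
    intro q hq a
    have hq' : (2 : ℝ) ≤ q := by exact_mod_cast hq
    split_ifs with hqQ
    · exact (add_one_le_mul_two_rpow hδ a).trans <| by gcongr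
    · rw [one_mul]
      refine add_one_le_rpow_of_two_le_rpow (by positivity) ?_ a
      calc (2 : ℝ) = (2 ^ δ⁻¹) ^ δ := by
            rw [← rpow_mul zero_le_two, inv_mul_cancel₀ hδ.ne', rpow_one]
        _ ≤ (q : ℝ) ^ δ := by
          gcongr
          exact (Nat.le_ceil _).trans (by exact_mod_cast not_lt.mp hqQ)
  refine ⟨K ^ Q, by positivity, fun n => ?_⟩
  rcases Nat.eq_zero_or_pos n with rfl | hn
  · simp [zero_rpow hδ.ne']
  have hfact : (n : ℝ) ^ δ = ∏ q ∈ n.primeFactors, (q : ℝ) ^ (n.factorization q * δ) := by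
    conv_lhs => rw [Nat.prod_primeFactors_pow_factorization hn.ne']
    rw [Nat.cast_prod, ← finsetProd_rpow _ _ (fun _ _ => by positivity)]
    refine prod_congr rfl fun q _ => ?_
    rw [Nat.cast_pow, ← rpow_natCast, ← rpow_mul (Nat.cast_nonneg q)]
  calc (#n.divisors : ℝ) = ∏ q ∈ n.primeFactors, ((n.factorization q : ℝ) + 1) := by
        rw [Nat.card_divisors hn.ne']; push_cast; rfl
    _ ≤ ∏ q ∈ n.primeFactors,
          ((if q < Q then K else 1) * (q : ℝ) ^ (n.factorization q * δ)) :=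
        prod_le_prod (fun _ _ => by positivity)
          fun q hq => hprime q (Nat.prime_of_mem_primeFactors hq).two_le _
    _ = K ^ #{q ∈ n.primeFactors | q < Q} * n ^ δ := by
        rw [prod_mul_distrib, prod_ite, prod_const, prod_const_one, mul_one, hfact]
    _ ≤ K ^ Q * n ^ δ := by
        gcongr
        exact (card_le_card fun q hq => mem_range.mpr (mem_filter.mp hq).2).trans_eq (card_range Q)

lemma harmonic_le_mul_rpow {δ : ℝ} (hδ : 0 < δ) (n : ℕ) :
    (harmonic n : ℝ) ≤ (1 + 1 / δ) * n ^ δ := by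
  rcases n.eq_zero_or_pos with rfl | hn
  · simp [zero_rpow hδ.ne']
  have hone : (1 : ℝ) ≤ n ^ δ := one_le_rpow (by exact_mod_cast hn) hδ.le
  calc (harmonic n : ℝ) ≤ 1 + log n := harmonic_le_one_add_log n
    _ ≤ n ^ δ + n ^ δ / δ := add_le_add hone (log_le_rpow_div n.cast_nonneg hδ)
    _ = (1 + 1 / δ) * n ^ δ := by ring

lemma mod_eq_one_or_eq_sub_one {p m : ℕ} [Fact (1 < p)]
    (h : (m : ZMod p) = 1 ∨ (m : ZMod p) = -1) : m % p = 1 ∨ m % p = p - 1 := by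
  rw [← ZMod.val_natCast]
  rcases h with h | h <;> rw [h]
  · exact .inl (ZMod.val_one p)
  · exact .inr (by rw [ZMod.neg_val, if_neg one_ne_zero, ZMod.val_one])

lemma mul_div_add_one_le_two_mul {p m : ℕ} (hm : 2 ≤ m) (h : m % p = 1 ∨ m % p = p - 1) :
    p * (m / p + 1) ≤ 2 * m := by
  have hdiv := Nat.div_add_mod m p
  rcases h with h | h
  · -- `m ≡ 1` and `m ≠ 1` force `m ≥ p + 1`
    have : p ≤ p * (m / p) := Nat.le_mul_of_pos_right p (Nat.pos_of_ne_zero fun h0 => by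
      rw [h0, mul_zero, zero_add] at hdiv; omega)
    linarith
  · have hp : 0 < p := Nat.pos_of_ne_zero fun hp => by rw [hp, Nat.mod_zero] at h; omega
    rw [mul_add, mul_one]
    omega

lemma dp_natCast_of_lt {p x : ℕ} (hx : x < p) : dp p x = min x (p - x) := by
  rw [dp, ← Int.natCast_mod, Int.toNat_natCast, Nat.mod_eq_of_lt hx]

lemma dp_lt {p : ℕ} (hp : 0 < p) (u : ℤ) : dp p u < p := by
  have := Int.emod_lt_of_pos u (Int.natCast_pos.mpr hp)
  exact (min_le_left _ _).trans_lt (by omega)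

lemma natCast_dp_eq_or_eq_neg (p : ℕ) [NeZero p] (u : ℤ) :
    (dp p u : ZMod p) = u ∨ (dp p u : ZMod p) = -u := by
  have hr : 0 ≤ u % p := Int.emod_nonneg u (Int.natCast_ne_zero.mpr (NeZero.ne p))
  have hlt := Int.emod_lt_of_pos u (Int.natCast_pos.mpr (NeZero.pos p))
  have hcast : ((u % p).toNat : ZMod p) = u := by
    rw [← Int.cast_natCast, Int.toNat_of_nonneg hr, ZMod.intCast_mod]
  rcases min_choice (u % p).toNat (p - (u % p).toNat) with h | h <;> rw [dp, h]
  · exact .inl hcast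
  · right
    rw [Nat.cast_sub (by omega), ZMod.natCast_self, zero_sub, hcast]

lemma card_filter_dp_eq_le_two {p : ℕ} {s : Finset ℕ} (hs : ∀ x ∈ s, x < p) (d : ℕ) :
    #(s.filter fun x : ℕ => dp p x = d) ≤ 2 := by
  calc #(s.filter fun x : ℕ => dp p x = d) ≤ #{d, p - d} := card_le_card fun x hx => by
        obtain ⟨hxs, hxd⟩ := mem_filter.mp hx
        have hxp := hs x hxs
        rw [dp_natCast_of_lt hxp] at hxd
        rw [mem_insert, mem_singleton]
        omega
    _ ≤ 2 := card_le_two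

lemma natCast_pinv (p x : ℕ) [NeZero p] : (pinv p x : ZMod p) = (x : ZMod p)⁻¹ :=
  ZMod.natCast_zmod_val _

lemma natCast_dp_mul_dp_pinv {p x : ℕ} [Fact p.Prime] (hx : (x : ZMod p) ≠ 0) :
    ((dp p x * dp p (pinv p x) : ℕ) : ZMod p) = 1 ∨
      ((dp p x * dp p (pinv p x) : ℕ) : ZMod p) = -1 := by
  have hinv : (x : ZMod p) * (pinv p x : ZMod p) = 1 := by
    rw [natCast_pinv, mul_inv_cancel₀ hx]
  rw [Nat.cast_mul]
  rcases natCast_dp_eq_or_eq_neg p x with hu | hu <;>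
    rcases natCast_dp_eq_or_eq_neg p (pinv p x) with hv | hv <;>
    simp only [hu, hv, Int.cast_natCast, neg_mul, mul_neg, neg_neg, hinv, true_or, or_true]

section Prime

variable {p : ℕ} [Fact p.Prime]

lemma natCast_ne_zero_of_mem_Icc {x : ℕ} (hx : x ∈ Icc 1 (p - 1)) : (x : ZMod p) ≠ 0 := by
  obtain ⟨hx1, hxp⟩ := mem_Icc.mp hx
  rw [Ne, ZMod.natCast_eq_zero_iff]
  exact fun h => absurd (Nat.le_of_dvd hx1 h) (by have := NeZero.pos p; omega)

lemma dp_mul_dp_pinv_div_lt (x : ℕ) : dp p x * dp p (pinv p x) / p < p :=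
  Nat.div_lt_of_lt_mul (Nat.mul_lt_mul'' (dp_lt (NeZero.pos p) _) (dp_lt (NeZero.pos p) _))

lemma mul_dp_mul_dp_pinv_div_add_one_le {x N : ℕ} (hx : (x : ZMod p) ≠ 0) (hu : 2 ≤ dp p x)
    (hv : N * dp p (pinv p x) ≤ p) : N * (dp p x * dp p (pinv p x) / p + 1) ≤ 2 * dp p x := by
  have hm := mod_eq_one_or_eq_sub_one (natCast_dp_mul_dp_pinv hx)
  set u := dp p x
  set v := dp p (pinv p x)
  have hp := (Fact.out : p.Prime).two_le
  have hv1 : 1 ≤ v := Nat.pos_of_ne_zero fun h0 => by rw [h0, mul_zero, Nat.zero_mod] at hm; omega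
  have hkey := mul_div_add_one_le_two_mul (le_mul_of_le_of_one_le hu hv1) hm
  refine Nat.le_of_mul_le_mul_left ?_ (NeZero.pos p)
  calc p * (N * (u * v / p + 1)) = N * (p * (u * v / p + 1)) := by ring
    _ ≤ N * (2 * (u * v)) := Nat.mul_le_mul_left N hkey
    _ = 2 * u * (N * v) := by ring
    _ ≤ 2 * u * p := Nat.mul_le_mul_left _ hv
    _ = p * (2 * u) := by ring

lemma card_filter_dp_mul_dp_pinv_div_eq_le {s : Finset ℕ} (hs : s ⊆ Icc 1 (p - 1)) (j : ℕ) :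
    #(s.filter fun x : ℕ => dp p x * dp p (pinv p x) / p = j) ≤
      2 * (#(p * j + 1).divisors + #(p * j + (p - 1)).divisors) := by
  have hp := (Fact.out : p.Prime).two_le
  calc #(s.filter fun x : ℕ => dp p x * dp p (pinv p x) / p = j)
      ≤ 2 * #((p * j + 1).divisors ∪ (p * j + (p - 1)).divisors) := by
        refine card_le_mul_card_image_of_maps_to (f := fun x : ℕ => dp p x) ?_ 2 fun d _ =>
          card_filter_dp_eq_le_two (fun x hx => ?_) d
        · intro x hx
          obtain ⟨hxs, hxj⟩ := mem_filter.mp hx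
          have hm := mod_eq_one_or_eq_sub_one
            (natCast_dp_mul_dp_pinv (natCast_ne_zero_of_mem_Icc (hs hxs)))
          have hdiv := Nat.div_add_mod (dp p x * dp p (pinv p x)) p
          rw [hxj] at hdiv
          rw [mem_union, Nat.mem_divisors, Nat.mem_divisors]
          rcases hm with h | h <;> rw [h] at hdiv
          · exact .inl ⟨⟨_, hdiv⟩, by omega⟩
          · exact .inr ⟨⟨_, hdiv⟩, by omega⟩
        · have := mem_Icc.mp (hs (mem_filter.mp hx).1)
          omega
    _ ≤ 2 * (#(p * j + 1).divisors + #(p * j + (p - 1)).divisors) := by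
        gcongr; exact card_union_le _ _

lemma sum_one_div_dp_le {M N : ℕ} (hMp : M < p) (hN : 1 ≤ N) {D : ℝ}
    (hD : ∀ n < p ^ 2, (#n.divisors : ℝ) ≤ D) :
    ∑ x ∈ (Icc 1 (p - 1)).filter
        (fun x : ℕ => (p : ℝ) < M * dp p x ∧ (N * dp p (pinv p x) : ℝ) ≤ p),
        (1 : ℝ) / dp p x ≤ 8 * D / N * harmonic p := by
  set s := (Icc 1 (p - 1)).filter
    (fun x : ℕ => (p : ℝ) < M * dp p x ∧ (N * dp p (pinv p x) : ℝ) ≤ p)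
  have hp := (Fact.out : p.Prime).two_le
  have hpoint : ∀ x ∈ s,
      (1 : ℝ) / dp p x ≤ 2 / (N * ((dp p x * dp p (pinv p x) / p : ℕ) + 1)) := by
    intro x hx
    obtain ⟨hxI, hMx, hNx⟩ := mem_filter.mp hx
    have hMu : M * 1 < M * dp p x := by rw [mul_one]; exact hMp.trans (by exact_mod_cast hMx)
    have hu := Nat.lt_of_mul_lt_mul_left hMu
    have key := mul_dp_mul_dp_pinv_div_add_one_le (natCast_ne_zero_of_mem_Icc hxI) hu
      (by exact_mod_cast hNx)
    rw [div_le_div_iff₀ (by positivity) (by positivity), one_mul]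
    exact_mod_cast key
  have hfiber : ∀ j ∈ range p,
      (#(s.filter fun x : ℕ => dp p x * dp p (pinv p x) / p = j) : ℝ) ≤ 4 * D := by
    intro j hj
    have hjp : p * j + p ≤ p ^ 2 := by
      rw [sq, ← mul_add_one]; exact Nat.mul_le_mul_left p (mem_range.mp hj)
    have h₁ := hD (p * j + 1) (by omega)
    have h₂ := hD (p * j + (p - 1)) (by omega)
    have := card_filter_dp_mul_dp_pinv_div_eq_le (s := s) (filter_subset _ _) j
    calc (#(s.filter fun x : ℕ => dp p x * dp p (pinv p x) / p = j) : ℝ)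
        ≤ 2 * (#(p * j + 1).divisors + #(p * j + (p - 1)).divisors) := by exact_mod_cast this
      _ ≤ 4 * D := by linarith
  calc ∑ x ∈ s, (1 : ℝ) / dp p x ≤ (4 * D) * ∑ j ∈ range p, (2 : ℝ) / (N * (j + 1)) :=
        sum_le_mul_sum_of_card_fiber_le
          (f := fun x : ℕ => dp p x * dp p (pinv p x) / p)
          (fun x _ => mem_range.mpr (dp_mul_dp_pinv_div_lt x))
          hpoint (fun _ _ => by positivity) hfiber
    _ = 8 * D / N * harmonic p := by
        rw [harmonic, Rat.cast_sum, mul_sum, mul_sum]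
        refine sum_congr rfl fun j _ => ?_
        push_cast
        field_simp
        ring

end Prime

theorem sum_inverse_dist_bound_S3 :
    ∀ ε : ℝ, 0 < ε → ∃ C : ℝ, 0 < C ∧
      ∀ p M N : ℕ, p.Prime → 1 ≤ M → M < p → 1 ≤ N → N < p →
        ∑ x ∈ (Finset.Icc 1 (p - 1)).filter
            (fun x : ℕ => (p : ℝ) < M * dp p x ∧ (N * dp p (pinv p x) : ℝ) ≤ p),
            (1 : ℝ) / (dp p x : ℝ) ≤
          C * (1 / (N : ℝ) + (M : ℝ) / p) * (p : ℝ) ^ ε := by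
  intro ε hε
  have hδ : 0 < ε / 3 := by positivity
  obtain ⟨C, hC, hdiv⟩ := exists_card_divisors_le_mul_rpow hδ
  refine ⟨8 * C * (1 + 3 / ε), by positivity, fun p M N hp _ hMp hN _ => ?_⟩
  have := Fact.mk hp
  have hp0 : (0 : ℝ) < p := by exact_mod_cast hp.pos
  have hD : ∀ n < p ^ 2, (#n.divisors : ℝ) ≤ C * (p : ℝ) ^ (2 * (ε / 3)) := fun n hn =>
    (hdiv n).trans <| by
      rw [rpow_mul hp0.le, rpow_two]
      gcongr
      exact_mod_cast hn.le
  calc _ ≤ 8 * (C * (p : ℝ) ^ (2 * (ε / 3))) / N * harmonic p := sum_one_div_dp_le hMp hN hD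
    _ ≤ 8 * (C * (p : ℝ) ^ (2 * (ε / 3))) / N * ((1 + 1 / (ε / 3)) * p ^ (ε / 3)) := by
        gcongr; exact harmonic_le_mul_rpow hδ p
    _ = 8 * C * (1 + 3 / ε) * (1 / N) * p ^ ε := by
        have hpow : (p : ℝ) ^ (2 * (ε / 3)) * p ^ (ε / 3) = p ^ ε := by
          rw [← rpow_add hp0]; ring_nf
        rw [← hpow]
        field_simp
    _ ≤ 8 * C * (1 + 3 / ε) * (1 / N + M / p) * p ^ ε := by
        gcongr
        exact le_add_of_nonneg_right (by positivity)
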